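/- arXiv:2006.07632 — 3 statements merged into one kernel-verified Lean document; each statement's English description precedes it below -/
import Mathlib

section
/- Let G be a finite symmetric (arc-transitive) graph, λ an eigenvalue of the normalized Laplacian with eigenspace of dimension m, and {u₁,…,u_m} an orthonormal basis of the eigenspace. Then the function on edges g(x,y) := Σ_{α=1}^m |u_α(y) − u_α(x)|² (for x ∼ y) is constant with value mλ/#E. -/
/-!
The kernel `K p q = ∑ α, u α p * u α q` of the eigenspace does not depend on the chosen
orthonormal basis. A graph automorphism `γ` commutes with the Laplacian and preserves the inner
product, so `u α ∘ γ` is again an orthonormal basis of the eigenspace, whence `K (γ p) (γ q) = K p q`.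
As `g x y = K y y - 2 K x y + K x x`, arc-transitivity makes `g` constant on edges. Summing `g` over
all directed edges counts each edge twice and gives `∑ α` of the Dirichlet energies
`2 ⟨u α, L u α⟩ = 2 l`, so `2 #E · g = 2 m l`.
-/

open Finset Real

/-- Normalized Laplace operator of a `d`-regular graph: `Δu(x) = (1/d)·Σ_{y∼x}(u y − u x)`. -/
noncomputable def nlap {V : Type*} [Fintype V] (G : SimpleGraph V) [DecidableRel G.Adj] (d : ℕ)
    (u : V → ℝ) (x : V) : ℝ :=
  (1 / (d : ℝ)) * ∑ y ∈ G.neighborFinset x, (u y - u x)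

/-- `l` is an eigenvalue of the normalized Laplacian: `Δu + l·u = 0` for some `u ≠ 0`. -/
def isEig {V : Type*} [Fintype V] (G : SimpleGraph V) [DecidableRel G.Adj] (d : ℕ)
    (l : ℝ) : Prop :=
  ∃ u : V → ℝ, u ≠ 0 ∧ ∀ x, nlap G d u x + l * u x = 0

open Matrix SimpleGraph

section Laplacian

variable {V : Type*} [Fintype V] (G : SimpleGraph V) [DecidableRel G.Adj]

lemma nlap_comp_iso (d : ℕ) (γ : G ≃g G) (w : V → ℝ) (x : V) :
    nlap G d (w ∘ γ) x = nlap G d w (γ x) := by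
  unfold nlap
  congr 1
  exact Finset.sum_equiv γ.toEquiv (fun y => by simp [γ.map_adj_iff]) (fun y _ => rfl)

lemma sum_sum_neighborFinset_eq_of_forall_adj {F : V → V → ℝ} {c : ℝ}
    (hF : ∀ x y, G.Adj x y → F x y = c) :
    ∑ x, ∑ y ∈ G.neighborFinset x, F x y = 2 * #G.edgeFinset * c := by
  have hdeg := congrArg (Nat.cast (R := ℝ)) G.sum_degrees_eq_twice_card_edges
  push_cast at hdeg
  rw [← hdeg, Finset.sum_mul]
  refine Finset.sum_congr rfl fun x _ => ?_
  rw [Finset.sum_congr rfl fun y hy => hF x y ((mem_neighborFinset G x y).mp hy),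
    Finset.sum_const, card_neighborFinset_eq_degree, nsmul_eq_mul]

variable [DecidableEq V]

lemma nlap_eq_neg_lapMatrix_mulVec_div (d : ℕ) (f : V → ℝ) (x : V) :
    nlap G d f x = -(G.lapMatrix ℝ *ᵥ f) x / d := by
  rw [nlap, lapMatrix_mulVec_apply, Finset.sum_sub_distrib, Finset.sum_const,
    card_neighborFinset_eq_degree, nsmul_eq_mul]
  ring

lemma lapMatrix_mulVec_eq_smul_of_nlap_add_mul_eq_zero {d : ℕ} (hd : (d : ℝ) ≠ 0) {l : ℝ}
    {f : V → ℝ} (hf : ∀ x, nlap G d f x + l * f x = 0) :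
    G.lapMatrix ℝ *ᵥ f = (d * l) • f := by
  ext x
  have := hf x
  rw [nlap_eq_neg_lapMatrix_mulVec_div] at this
  field_simp at this
  simp only [Pi.smul_apply, smul_eq_mul]
  linarith

lemma sum_sum_neighborFinset_sub_sq (f : V → ℝ) :
    ∑ x, ∑ y ∈ G.neighborFinset x, (f y - f x) ^ 2 = 2 * (f ⬝ᵥ (G.lapMatrix ℝ *ᵥ f)) := by
  rw [← toLinearMap₂'_apply', lapMatrix_toLinearMap₂', mul_div_cancel₀ _ two_ne_zero]
  refine Finset.sum_congr rfl fun x _ => ?_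
  rw [neighborFinset_eq_filter, Finset.sum_filter]
  exact Finset.sum_congr rfl fun y _ => by rw [sub_sq_comm]

lemma sum_sum_neighborFinset_sub_sq_of_nlap_add_mul_eq_zero {d : ℕ} {l : ℝ} {f : V → ℝ}
    (hf : ∀ x, nlap G d f x + l * f x = 0) (hnorm : (d : ℝ) * ∑ x, f x * f x = 1) :
    ∑ x, ∑ y ∈ G.neighborFinset x, (f y - f x) ^ 2 = 2 * l := by
  have hd : (d : ℝ) ≠ 0 := left_ne_zero_of_mul_eq_one hnorm
  rw [sum_sum_neighborFinset_sub_sq, lapMatrix_mulVec_eq_smul_of_nlap_add_mul_eq_zero G hd hf,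
    dotProduct_smul, smul_eq_mul, dotProduct]
  linear_combination 2 * l * hnorm

end Laplacian

lemma Matrix.transpose_mul_self_eq_of_eq_mul {m n R : Type*} [Fintype m] [DecidableEq m]
    [Fintype n] [CommRing R] {U W : Matrix m n R} {C : Matrix m m R} {a : R}
    (hU : a • (U * Uᵀ) = 1) (hW : a • (W * Wᵀ) = 1) (hWU : W = C * U) :
    Wᵀ * W = Uᵀ * U := by
  have hC : C * Cᵀ = 1 := by
    rw [← hW, hWU, transpose_mul, Matrix.mul_assoc, ← Matrix.mul_assoc U, ← Matrix.mul_smul,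
      ← Matrix.smul_mul, hU, Matrix.one_mul]
  rw [hWU, transpose_mul, Matrix.mul_assoc, ← Matrix.mul_assoc Cᵀ, mul_eq_one_comm.mp hC,
    Matrix.one_mul]

lemma sum_mul_comp_iso_eq_of_orthonormal_eigenbasis {V : Type*} [Fintype V] (G : SimpleGraph V)
    [DecidableRel G.Adj] {d m : ℕ} {l : ℝ} {u : Fin m → V → ℝ}
    (hmem : ∀ α z, nlap G d (u α) z + l * u α z = 0)
    (hspan : ∀ v : V → ℝ, (∀ z, nlap G d v z + l * v z = 0) →
      v ∈ Submodule.span ℝ (Set.range u))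
    (horth : ∀ α β, (d : ℝ) * ∑ x, u α x * u β x = if α = β then 1 else 0)
    (γ : G ≃g G) (p q : V) :
    ∑ α, u α (γ p) * u α (γ q) = ∑ α, u α p * u α q := by
  have gram (U : Matrix (Fin m) V ℝ)
      (hU : ∀ α β, (d : ℝ) * ∑ x, U α x * U β x = if α = β then 1 else 0) :
      (d : ℝ) • (U * Uᵀ) = 1 := by
    ext α β
    simp [Matrix.mul_apply, Matrix.one_apply, hU]
  let W : Matrix (Fin m) V ℝ := Matrix.of fun α => u α ∘ γ
  have hWorth : ∀ α β, (d : ℝ) * ∑ x, W α x * W β x = if α = β then 1 else 0 := fun α β => by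
    rw [← horth]
    congr 1
    exact Equiv.sum_comp γ.toEquiv fun x => u α x * u β x
  have hWeig (α : Fin m) (z : V) : nlap G d (u α ∘ γ) z + l * (u α ∘ γ) z = 0 := by
    rw [nlap_comp_iso]
    exact hmem α (γ z)
  choose C hC using fun α => (Submodule.mem_span_range_iff_exists_fun ℝ).mp (hspan _ (hWeig α))
  have hWU : W = Matrix.of C * Matrix.of u := by
    ext α x
    simpa [W, Matrix.mul_apply, Finset.sum_apply] using (congrFun (hC α) x).symm
  have hK := congrFun (congrFun
    (Matrix.transpose_mul_self_eq_of_eq_mul (gram (Matrix.of u) horth) (gram W hWorth) hWU) p) q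
  simpa [Matrix.mul_apply, W] using hK

theorem stmt_8_general {V : Type*} [Fintype V] [DecidableEq V] (G : SimpleGraph V)
    [DecidableRel G.Adj] (d m : ℕ)
    (hsym : ∀ ⦃x y x' y' : V⦄, G.Adj x y → G.Adj x' y' →
      ∃ γ : G ≃g G, γ x = x' ∧ γ y = y')
    (l : ℝ)
    (u : Fin m → V → ℝ)
    (hmem : ∀ α, ∀ z, nlap G d (u α) z + l * u α z = 0)
    (hspan : ∀ v : V → ℝ, (∀ z, nlap G d v z + l * v z = 0) →
      v ∈ Submodule.span ℝ (Set.range u))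
    (horth : ∀ α β, (d : ℝ) * ∑ x, u α x * u β x = if α = β then 1 else 0) :
    ∀ x y : V, G.Adj x y →
      ∑ α, (u α y - u α x) ^ 2 = (m : ℝ) * l / G.edgeFinset.card := by
  intro x y hxy
  have hexpand (p q : V) : ∑ α, (u α q - u α p) ^ 2 =
      ∑ α, u α q * u α q - 2 * ∑ α, u α p * u α q + ∑ α, u α p * u α p := by
    rw [Finset.mul_sum, ← Finset.sum_sub_distrib, ← Finset.sum_add_distrib]
    exact Finset.sum_congr rfl fun α _ => by ring
  have hconst (x' y' : V) (h' : G.Adj x' y') :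
      ∑ α, (u α y' - u α x') ^ 2 = ∑ α, (u α y - u α x) ^ 2 := by
    obtain ⟨γ, rfl, rfl⟩ := hsym hxy h'
    simp only [hexpand, sum_mul_comp_iso_eq_of_orthonormal_eigenbasis G hmem hspan horth]
  have henergy : ∑ z, ∑ y' ∈ G.neighborFinset z, ∑ α, (u α y' - u α z) ^ 2 = m * (2 * l) := by
    rw [Finset.sum_congr rfl fun z _ => Finset.sum_comm, Finset.sum_comm]
    simp [sum_sum_neighborFinset_sub_sq_of_nlap_add_mul_eq_zero G (hmem _)
      ((horth _ _).trans (if_pos rfl))]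
  rw [sum_sum_neighborFinset_eq_of_forall_adj G hconst] at henergy
  have hE : (0 : ℝ) < #G.edgeFinset :=
    Nat.cast_pos.mpr (Finset.card_pos.mpr ⟨s(x, y), G.mem_edgeFinset.mpr hxy⟩)
  rw [eq_div_iff hE.ne']
  linarith

/-- On a finite symmetric (arc-transitive) `d`-regular graph, for an orthonormal basis
`u₁,…,u_m` of the eigenspace of an eigenvalue `l` of the normalized Laplacian, the function
`g(x,y) = Σ_α |u_α(y) − u_α(x)|²` on adjacent pairs is constant with value `m·l/#E`. -/
theorem stmt_8 {V : Type*} [Fintype V] [DecidableEq V] (G : SimpleGraph V)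
    [DecidableRel G.Adj] (d m : ℕ) (hd : 0 < d) (hreg : ∀ x, G.degree x = d)
    (hsym : ∀ ⦃x y x' y' : V⦄, G.Adj x y → G.Adj x' y' →
      ∃ γ : G ≃g G, γ x = x' ∧ γ y = y')
    (l : ℝ) (hl : isEig G d l)
    (u : Fin m → V → ℝ)
    (hmem : ∀ α, ∀ z, nlap G d (u α) z + l * u α z = 0)
    (hspan : ∀ v : V → ℝ, (∀ z, nlap G d v z + l * v z = 0) →
      v ∈ Submodule.span ℝ (Set.range u))
    (horth : ∀ α β, (d : ℝ) * ∑ x, u α x * u β x = if α = β then 1 else 0) :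
    ∀ x y : V, G.Adj x y →
      ∑ α, (u α y - u α x) ^ 2 = (m : ℝ) * l / G.edgeFinset.card :=
  stmt_8_general G d m hsym l u hmem hspan horth
end

section
/- Let G be a connected finite d-regular graph with N vertices and normalized Laplacian eigenvalues λ₀ ≤ λ₁ ≤ ⋯ ≤ λ_{N−1}. Then for any 0 ≤ k ≤ N−1, Σ_{i=0}^k (1 − λ_i) ≥ 0, with equality if and only if k = N−1. -/
open Finset Real

/-!
With `ν_i = d (1 - λ_i)` the adjacency eigenvalues, the claim is about the partial sums of the
non-increasing sequence `a_i = 1 - λ_i`. Two facts pin it down: `Σ_i a_i = trace A / d = 0`, and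
`a_0 ≥ 1`: the constant function is not orthogonal to every eigenvector, so some `λ_j` is `0`.
For `k < N - 1`, either `a_k ≥ 0`, and then the partial sum is at least `a_0 > 0`, or `a_k < 0`,
and then the partial sum equals minus a nonempty tail of negative terms.
-/

/-- An orthonormal family of `card V` vectors is a basis, so its dual relation also holds. -/
theorem sum_range_mul_mul_eq_ite_of_orthonormal {R V : Type*} [CommRing R] [Fintype V]
    [DecidableEq V] (c : R) (u : ℕ → V → R)
    (horth : ∀ i j, i < Fintype.card V → j < Fintype.card V →
      c * ∑ x, u i x * u j x = if i = j then 1 else 0) (x y : V) :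
    ∑ i ∈ range (Fintype.card V), c * (u i x * u i y) = if x = y then 1 else 0 := by
  set A : Matrix (Fin (Fintype.card V)) V R := Matrix.of fun i x => c * u i x
  set B : Matrix V (Fin (Fintype.card V)) R := Matrix.of fun x i => u i x
  have hAB : A * B = 1 := by
    ext i j
    simp only [A, B, Matrix.mul_apply, Matrix.of_apply, mul_assoc, ← mul_sum]
    rw [horth i j i.isLt j.isLt, Matrix.one_apply]
    simp [Fin.ext_iff]
  have hBA := congr_fun₂
    ((Matrix.mul_eq_one_comm_of_card_eq _ _ _ (Fintype.card_fin _)).mp hAB) x y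
  simpa [A, B, Matrix.mul_apply, Matrix.one_apply, ← Fin.sum_univ_eq_sum_range, mul_left_comm]
    using hBA

theorem sum_range_pos_of_antitoneOn {a : ℕ → ℝ} {n k : ℕ} (ha : AntitoneOn a (Set.Iio n))
    (ha0 : 0 < a 0) (hsum : ∑ i ∈ range n, a i = 0) (hk : k + 1 < n) :
    0 < ∑ i ∈ range (k + 1), a i := by
  have hle : ∀ i, i ≤ k → a k ≤ a i := fun i hi =>
    ha (Set.mem_Iio.mpr (by omega)) (Set.mem_Iio.mpr (by omega)) hi
  by_cases hak : 0 ≤ a k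
  · have hrest : 0 ≤ ∑ i ∈ range k, a (i + 1) :=
      sum_nonneg fun i hi => hak.trans (hle _ (by simp at hi; omega))
    rw [sum_range_succ']
    linarith
  · have htail : ∑ i ∈ Ico (k + 1) n, a i < 0 := by
      refine sum_neg (fun i hi => ?_) (nonempty_Ico.mpr hk)
      rw [mem_Ico] at hi
      exact (ha (Set.mem_Iio.mpr (by omega)) (Set.mem_Iio.mpr hi.2) (by omega)).trans_lt
        (not_le.mp hak)
    linarith [sum_range_add_sum_Ico a hk.le]

section NormalizedLaplacian

variable {V : Type*} [Fintype V] (G : SimpleGraph V) [DecidableRel G.Adj]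

theorem sum_sum_neighborFinset_comm {M : Type*} [AddCommMonoid M] (f : V → V → M) :
    ∑ x, ∑ y ∈ G.neighborFinset x, f x y = ∑ y, ∑ x ∈ G.neighborFinset y, f x y := by
  simp only [SimpleGraph.neighborFinset_eq_filter, sum_filter]
  rw [sum_comm]
  simp only [G.adj_comm]

theorem sum_nlap_eq_zero (d : ℕ) (v : V → ℝ) : ∑ x, nlap G d v x = 0 := by
  have hswap : ∑ x, ∑ y ∈ G.neighborFinset x, v y = ∑ x, ∑ y ∈ G.neighborFinset x, v x :=
    sum_sum_neighborFinset_comm G fun _ y => v y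
  simp only [nlap, ← mul_sum, sum_sub_distrib, hswap, sub_self, mul_zero]

theorem eq_zero_of_nlap_add_mul_eq_zero {d : ℕ} {l : ℝ} {v : V → ℝ}
    (h : ∀ x, nlap G d v x + l * v x = 0) (hv : ∑ x, v x ≠ 0) : l = 0 := by
  have hsum : ∑ x, (nlap G d v x + l * v x) = 0 := sum_eq_zero fun x _ => h x
  rw [sum_add_distrib, sum_nlap_eq_zero, ← mul_sum, zero_add] at hsum
  exact (mul_eq_zero.mp hsum).resolve_right hv

theorem sum_neighborFinset_eq_of_nlap_add_mul_eq_zero {d : ℕ} (hd : d ≠ 0)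
    (hreg : ∀ x, G.degree x = d) {l : ℝ} {v : V → ℝ} (h : ∀ x, nlap G d v x + l * v x = 0)
    (x : V) : ∑ y ∈ G.neighborFinset x, v y = d * (1 - l) * v x := by
  have hx := h x
  rw [nlap, sum_sub_distrib, sum_const, SimpleGraph.card_neighborFinset_eq_degree, hreg,
    nsmul_eq_mul] at hx
  field_simp at hx
  linarith

variable {G}

theorem sum_range_one_sub_eq_zero {d : ℕ} (hd : d ≠ 0) (hreg : ∀ x, G.degree x = d)
    (lam : ℕ → ℝ) (u : ℕ → V → ℝ)
    (horth : ∀ i j, i < Fintype.card V → j < Fintype.card V →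
      (d : ℝ) * ∑ x, u i x * u j x = if i = j then 1 else 0)
    (heig : ∀ i, i < Fintype.card V → ∀ x, nlap G d (u i) x + lam i * u i x = 0) :
    ∑ i ∈ range (Fintype.card V), (1 - lam i) = 0 := by
  classical
  have hdiag : ∀ i ∈ range (Fintype.card V), (d : ℝ) * (1 - lam i)
      = ∑ x, ∑ y ∈ G.neighborFinset x, (d : ℝ) * (u i x * u i y) := by
    intro i hi
    have hi := mem_range.mp hi
    calc (d : ℝ) * (1 - lam i) = (d : ℝ) * (1 - lam i) * ((d : ℝ) * ∑ x, u i x * u i x) := by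
          rw [horth i i hi hi, if_pos rfl, mul_one]
      _ = ∑ x, (d : ℝ) * u i x * ∑ y ∈ G.neighborFinset x, u i y := by
          simp only [sum_neighborFinset_eq_of_nlap_add_mul_eq_zero G hd hreg (heig i hi), mul_sum]
          exact sum_congr rfl fun _ _ => by ring
      _ = ∑ x, ∑ y ∈ G.neighborFinset x, (d : ℝ) * (u i x * u i y) := by
          simp only [mul_sum, mul_assoc]
  have hoff : ∀ x, ∀ y ∈ G.neighborFinset x,
      ∑ i ∈ range (Fintype.card V), (d : ℝ) * (u i x * u i y) = 0 := fun x y hy => by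
    rw [sum_range_mul_mul_eq_ite_of_orthonormal _ u horth,
      if_neg (G.ne_of_adj ((G.mem_neighborFinset x y).mp hy))]
  have hd' : (d : ℝ) * ∑ i ∈ range (Fintype.card V), (1 - lam i) = 0 := by
    rw [mul_sum, sum_congr rfl hdiag, sum_comm]
    exact sum_eq_zero fun x _ => by rw [sum_comm]; exact sum_eq_zero (hoff x)
  exact (mul_eq_zero.mp hd').resolve_left (Nat.cast_ne_zero.mpr hd)

theorem exists_eigenvalue_eq_zero [Nonempty V] (d : ℕ) (lam : ℕ → ℝ) (u : ℕ → V → ℝ)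
    (horth : ∀ i j, i < Fintype.card V → j < Fintype.card V →
      (d : ℝ) * ∑ x, u i x * u j x = if i = j then 1 else 0)
    (heig : ∀ i, i < Fintype.card V → ∀ x, nlap G d (u i) x + lam i * u i x = 0) :
    ∃ i < Fintype.card V, lam i = 0 := by
  classical
  by_contra! hne
  have hsum : ∀ i ∈ range (Fintype.card V), ∑ x, u i x = 0 := fun i hi => by
    by_contra hs
    exact hne i (mem_range.mp hi) (eq_zero_of_nlap_add_mul_eq_zero G (heig i (mem_range.mp hi)) hs)
  have hcard : (Fintype.card V : ℝ) = 0 := by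
    calc (Fintype.card V : ℝ) = ∑ x : V, ∑ y : V, if x = y then (1 : ℝ) else 0 := by simp
      _ = ∑ i ∈ range (Fintype.card V), (d : ℝ) * ((∑ x, u i x) * ∑ y, u i y) := by
          simp only [← sum_range_mul_mul_eq_ite_of_orthonormal _ u horth, mul_sum, sum_mul]
          simp_rw [sum_comm (s := range (Fintype.card V))]
          rw [sum_comm]
      _ = 0 := sum_eq_zero fun i hi => by rw [hsum i hi, zero_mul, mul_zero]
  exact Fintype.card_ne_zero (Nat.cast_eq_zero.mp hcard)

end NormalizedLaplacian

theorem stmt_11_general {V : Type*} [Fintype V] (G : SimpleGraph V) [DecidableRel G.Adj]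
    (d : ℕ) (hd : 0 < d) (hreg : ∀ x, G.degree x = d)
    (lam : ℕ → ℝ) (u : ℕ → V → ℝ)
    (hmono : ∀ i j, i ≤ j → j < Fintype.card V → lam i ≤ lam j)
    (horth : ∀ i j, i < Fintype.card V → j < Fintype.card V →
      (d : ℝ) * ∑ x, u i x * u j x = if i = j then 1 else 0)
    (heig : ∀ i, i < Fintype.card V → ∀ x, nlap G d (u i) x + lam i * u i x = 0)
    :
    ∀ k, k < Fintype.card V →
      (0 ≤ ∑ i ∈ Finset.range (k + 1), (1 - lam i)) ∧
      ((∑ i ∈ Finset.range (k + 1), (1 - lam i)) = 0 ↔ k = Fintype.card V - 1) := by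
  intro k hk
  have : Nonempty V := Fintype.card_pos_iff.mp (by omega)
  have htrace := sum_range_one_sub_eq_zero hd.ne' hreg lam u horth heig
  obtain ⟨j, hj, hlamj⟩ := exists_eigenvalue_eq_zero d lam u horth heig
  have hanti : AntitoneOn (fun i => 1 - lam i) (Set.Iio (Fintype.card V)) :=
    fun i _ j hj hij => sub_le_sub_left (hmono i j hij hj) 1
  have ha0 : 0 < 1 - lam 0 := by linarith [hmono 0 j j.zero_le hj]
  rcases eq_or_ne k (Fintype.card V - 1) with rfl | hk'
  · rw [Nat.sub_add_cancel (by omega), htrace]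
    simp
  · have hpos := sum_range_pos_of_antitoneOn hanti ha0 htrace (by omega : k + 1 < Fintype.card V)
    exact ⟨hpos.le, iff_of_false hpos.ne' hk'⟩

/-- For a connected finite `d`-regular graph with normalized Laplacian eigenvalues
`λ₀ ≤ ⋯ ≤ λ_{N−1}` (with orthonormal eigenbasis), for any `0 ≤ k ≤ N−1` one has
`Σ_{i=0}^k (1 − λ_i) ≥ 0`, with equality iff `k = N−1`. -/
theorem stmt_11 {V : Type*} [Fintype V] (G : SimpleGraph V) [DecidableRel G.Adj]
    (d : ℕ) (hd : 0 < d) (hconn : G.Connected) (hreg : ∀ x, G.degree x = d)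
    (lam : ℕ → ℝ) (u : ℕ → V → ℝ)
    (hmono : ∀ i j, i ≤ j → j < Fintype.card V → lam i ≤ lam j)
    (horth : ∀ i j, i < Fintype.card V → j < Fintype.card V →
      (d : ℝ) * ∑ x, u i x * u j x = if i = j then 1 else 0)
    (heig : ∀ i, i < Fintype.card V → ∀ x, nlap G d (u i) x + lam i * u i x = 0)
    :
    ∀ k, k < Fintype.card V →
      (0 ≤ ∑ i ∈ Finset.range (k + 1), (1 - lam i)) ∧
      ((∑ i ∈ Finset.range (k + 1), (1 - lam i)) = 0 ↔ k = Fintype.card V - 1) :=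
  stmt_11_general G d hd hreg lam u hmono horth heig
end

section
/- Let G be a finite d-regular graph with normalized Laplacian eigenvalues λ₀ ≤ ⋯ ≤ λ_{N−1} and orthonormal eigenfunctions u₀,…,u_{N−1}. For any function h on V and any 0 ≤ k ≤ N−2, (1/2)·Σ_{i=0}^k (λ_{k+1} − λ_i)²·Φ_i(h) ≤ Σ_{i=0}^k (λ_{k+1} − λ_i)·‖2Γ(h,u_i) + u_i·Δh‖², where Φ_i(h) = Σ_{x∼y} u_i(x)u_i(y)(h(y) − h(x))². -/
/-!
Write `a i j = ⟨h u_i, u_j⟩`, which is symmetric in `i, j`. Since `Δ` is self-adjoint,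
`2Γ(h, u_i) + u_i Δh = Δ(h u_i) + λ_i h u_i` has coefficients `(λ_i - λ_j) a i j`, so by Parseval
its squared norm is `∑_j (λ_i - λ_j)² (a i j)²`. Summation by parts turns the double sum over
ordered neighbour pairs into `2 ∑_j (λ_j - λ_i) (a i j)²`. Hence, with `μ = λ_{k+1}`, the right side
minus the left side is `∑_{i ≤ k} ∑_j (μ - λ_i)(λ_j - λ_i)(λ_j - μ) (a i j)²`: the terms with
`j ≤ k` cancel in pairs and those with `j > k` are nonnegative.
-/

open Finset Real

noncomputable def cdc {V : Type*} [Fintype V] (G : SimpleGraph V) [DecidableRel G.Adj]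
    (d : ℕ) (u v : V → ℝ) (x : V) : ℝ :=
  (1 / 2) * (nlap G d (u * v) x - nlap G d u x * v x - u x * nlap G d v x)

section WeightedInner

variable {V : Type*} [Fintype V]

def weightedInner (c : ℝ) (f g : V → ℝ) : ℝ := c * ∑ x, f x * g x

lemma weightedInner_mul_left_comm (c : ℝ) (h f g : V → ℝ) :
    weightedInner c (h * f) g = weightedInner c (h * g) f := by
  simp only [weightedInner, Pi.mul_apply]
  exact congrArg _ (sum_congr rfl fun x _ => by ring)

variable {c : ℝ} {u : ℕ → V → ℝ}

lemma sum_range_card_mul_eq_ite [DecidableEq V]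
    (horth : ∀ i j, i < Fintype.card V → j < Fintype.card V →
      weightedInner c (u i) (u j) = if i = j then 1 else 0) (x y : V) :
    ∑ i ∈ range (Fintype.card V), c * (u i x * u i y) = if x = y then 1 else 0 := by
  let A : Matrix (Fin (Fintype.card V)) V ℝ := Matrix.of fun i x => u i x
  have hAB : A * (c • A.transpose) = 1 := by
    ext i j
    simpa [A, Matrix.mul_apply, Matrix.one_apply, weightedInner, Fin.val_inj, mul_sum,
      mul_left_comm] using horth i j i.2 j.2
  have hBA := (Matrix.mul_eq_one_comm_of_equiv (Fintype.equivFin V).symm).1 hAB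
  simpa [A, Matrix.mul_apply, Matrix.one_apply, mul_assoc,
    Fin.sum_univ_eq_sum_range (fun i => c * (u i x * u i y))] using congrFun (congrFun hBA x) y

lemma sum_weightedInner_mul_weightedInner
    (horth : ∀ i j, i < Fintype.card V → j < Fintype.card V →
      weightedInner c (u i) (u j) = if i = j then 1 else 0) (f g : V → ℝ) :
    ∑ i ∈ range (Fintype.card V), weightedInner c f (u i) * weightedInner c g (u i) =
      weightedInner c f g := by
  classical
  calc ∑ i ∈ range (Fintype.card V), weightedInner c f (u i) * weightedInner c g (u i)
      = ∑ i ∈ range (Fintype.card V), ∑ x, ∑ y, c * (f x * g y) * (c * (u i x * u i y)) := by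
        refine sum_congr rfl fun i _ => ?_
        rw [weightedInner, weightedInner, mul_mul_mul_comm, sum_mul_sum, mul_sum]
        exact sum_congr rfl fun x _ => by rw [mul_sum]; exact sum_congr rfl fun y _ => by ring
    _ = ∑ x, ∑ y, c * (f x * g y) * ∑ i ∈ range (Fintype.card V), c * (u i x * u i y) := by
        rw [← sum_comm_cycle]; simp only [mul_sum]
    _ = weightedInner c f g := by
        simp [sum_range_card_mul_eq_ite horth, weightedInner, mul_sum]

end WeightedInner

section GraphLaplacian

variable {V : Type*} [Fintype V] (G : SimpleGraph V) [DecidableRel G.Adj]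

lemma sum_sum_neighborFinset_swap (F : V → V → ℝ) :
    ∑ x, ∑ y ∈ G.neighborFinset x, F x y = ∑ x, ∑ y ∈ G.neighborFinset x, F y x := by
  classical
  simp only [SimpleGraph.neighborFinset_eq_filter, sum_filter]
  rw [sum_comm]
  simp only [G.adj_comm]

lemma natCast_mul_nlap {d : ℕ} (hd : d ≠ 0) (f : V → ℝ) (x : V) :
    d * nlap G d f x = ∑ y ∈ G.neighborFinset x, (f y - f x) := by
  rw [nlap, ← mul_assoc, mul_one_div_cancel (Nat.cast_ne_zero.2 hd), one_mul]

lemma weightedInner_nlap_comm (c : ℝ) (d : ℕ) (f g : V → ℝ) :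
    weightedInner c (nlap G d f) g = weightedInner c f (nlap G d g) := by
  have hsymm : ∑ x, ∑ y ∈ G.neighborFinset x, (f y - f x) * g x =
      ∑ x, ∑ y ∈ G.neighborFinset x, f x * (g y - g x) := by
    simp only [sub_mul, mul_sub, sum_sub_distrib]
    rw [sum_sum_neighborFinset_swap G fun x y => f x * g y]
  calc weightedInner c (nlap G d f) g
      = c * (1 / d) * ∑ x, ∑ y ∈ G.neighborFinset x, (f y - f x) * g x := by
        simp only [weightedInner, nlap, mul_sum, sum_mul, mul_assoc]
    _ = weightedInner c f (nlap G d g) := by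
        rw [hsymm]
        simp only [weightedInner, nlap, mul_sum, mul_assoc, mul_left_comm _ (f _)]

lemma two_mul_cdc_add_mul_nlap (d : ℕ) (h v : V → ℝ) (x : V) :
    2 * cdc G d h v x + v x * nlap G d h x = nlap G d (h * v) x - h x * nlap G d v x := by
  rw [cdc]
  ring

lemma sum_neighborFinset_mul_sub_sq {d : ℕ} (hd : d ≠ 0) (u h : V → ℝ) :
    ∑ x, ∑ y ∈ G.neighborFinset x, u x * u y * (h y - h x) ^ 2 =
      2 * (weightedInner d (h * h * u) (nlap G d u) -
        weightedInner d (h * u) (nlap G d (h * u))) := by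
  have hexpand : ∀ f g : V → ℝ,
      weightedInner d f (nlap G d g) = ∑ x, ∑ y ∈ G.neighborFinset x, f x * (g y - g x) := by
    intro f g
    simp only [weightedInner, mul_sum, mul_left_comm _ (f _), natCast_mul_nlap G hd]
  calc ∑ x, ∑ y ∈ G.neighborFinset x, u x * u y * (h y - h x) ^ 2
      = ∑ x, ∑ y ∈ G.neighborFinset x,
          (u x * u y * h x * (h x - h y) + u y * u x * h y * (h y - h x)) :=
        sum_congr rfl fun x _ => sum_congr rfl fun y _ => by ring
    _ = 2 * ∑ x, ∑ y ∈ G.neighborFinset x, u x * u y * h x * (h x - h y) := by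
        simp only [sum_add_distrib]
        rw [← sum_sum_neighborFinset_swap G fun x y => u x * u y * h x * (h x - h y)]
        ring
    _ = _ := by
        rw [hexpand, hexpand, ← sum_sub_distrib]
        congr 1
        refine sum_congr rfl fun x _ => ?_
        rw [← sum_sub_distrib]
        exact sum_congr rfl fun y _ => by simp only [Pi.mul_apply]; ring

end GraphLaplacian

section Eigenbasis

variable {V : Type*} [Fintype V] (G : SimpleGraph V) [DecidableRel G.Adj] {d : ℕ}

lemma weightedInner_nlap_right_of_eigen (c : ℝ) {l : ℝ} {v : V → ℝ}
    (hv : ∀ x, nlap G d v x + l * v x = 0) (f : V → ℝ) :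
    weightedInner c f (nlap G d v) = -l * weightedInner c f v := by
  have hv' : nlap G d v = fun x => -l * v x := funext fun x => by linarith [hv x]
  rw [hv', weightedInner, weightedInner, mul_sum, mul_sum, mul_sum]
  exact sum_congr rfl fun x _ => by ring

lemma weightedInner_nlap_left_of_eigen (c : ℝ) {l : ℝ} {v : V → ℝ}
    (hv : ∀ x, nlap G d v x + l * v x = 0) (f : V → ℝ) :
    weightedInner c (nlap G d f) v = -l * weightedInner c f v := by
  rw [weightedInner_nlap_comm, weightedInner_nlap_right_of_eigen G c hv]

variable {lam : ℕ → ℝ} {u : ℕ → V → ℝ}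

lemma weightedInner_self_two_mul_cdc_add_mul_nlap
    (horth : ∀ i j, i < Fintype.card V → j < Fintype.card V →
      weightedInner d (u i) (u j) = if i = j then 1 else 0)
    (heig : ∀ i, i < Fintype.card V → ∀ x, nlap G d (u i) x + lam i * u i x = 0)
    (h : V → ℝ) {i : ℕ} (hi : i < Fintype.card V) :
    (d : ℝ) * ∑ x, (2 * cdc G d h (u i) x + u i x * nlap G d h x) ^ 2 =
      ∑ j ∈ range (Fintype.card V), (lam i - lam j) ^ 2 * weightedInner d (h * u i) (u j) ^ 2 := by
  set w : V → ℝ := fun x => 2 * cdc G d h (u i) x + u i x * nlap G d h x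
  have hw : w = fun x => nlap G d (h * u i) x + lam i * (h * u i) x := funext fun x => by
    simp only [w, two_mul_cdc_add_mul_nlap, Pi.mul_apply]
    linear_combination (-h x) * heig i hi x
  have hcoeff : ∀ j < Fintype.card V,
      weightedInner d w (u j) = (lam i - lam j) * weightedInner d (h * u i) (u j) := by
    intro j hj
    have hlap := weightedInner_nlap_left_of_eigen G d (heig j hj) (h * u i)
    rw [hw]
    simp only [weightedInner, add_mul, sum_add_distrib, mul_add, mul_assoc, ← mul_sum] at hlap ⊢
    rw [hlap]
    ring
  calc (d : ℝ) * ∑ x, w x ^ 2 = weightedInner d w w := by simp only [weightedInner, sq]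
    _ = ∑ j ∈ range (Fintype.card V), weightedInner d w (u j) * weightedInner d w (u j) :=
        (sum_weightedInner_mul_weightedInner horth w w).symm
    _ = _ := sum_congr rfl fun j hj => by rw [hcoeff j (mem_range.1 hj)]; ring

lemma sum_neighborFinset_eigen_mul_sub_sq (hd : d ≠ 0)
    (horth : ∀ i j, i < Fintype.card V → j < Fintype.card V →
      weightedInner d (u i) (u j) = if i = j then 1 else 0)
    (heig : ∀ i, i < Fintype.card V → ∀ x, nlap G d (u i) x + lam i * u i x = 0)
    (h : V → ℝ) {i : ℕ} (hi : i < Fintype.card V) :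
    ∑ x, ∑ y ∈ G.neighborFinset x, u i x * u i y * (h y - h x) ^ 2 =
      2 * ∑ j ∈ range (Fintype.card V), (lam j - lam i) * weightedInner d (h * u i) (u j) ^ 2 := by
  set g := h * u i
  have hfirst : weightedInner d (h * h * u i) (nlap G d (u i)) =
      ∑ j ∈ range (Fintype.card V), -lam i * weightedInner d g (u j) ^ 2 := by
    rw [weightedInner_nlap_right_of_eigen G d (heig i hi), ← mul_sum]
    simp only [sq, sum_weightedInner_mul_weightedInner horth]
    congr 1
    simp only [weightedInner, g, Pi.mul_apply]
    exact congrArg _ (sum_congr rfl fun x _ => by ring)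
  have hsecond : weightedInner d g (nlap G d g) =
      ∑ j ∈ range (Fintype.card V), -lam j * weightedInner d g (u j) ^ 2 := by
    rw [← sum_weightedInner_mul_weightedInner horth]
    refine sum_congr rfl fun j hj => ?_
    rw [weightedInner_nlap_left_of_eigen G d (heig j (mem_range.1 hj))]
    ring
  rw [sum_neighborFinset_mul_sub_sq G hd, hfirst, hsecond, ← sum_sub_distrib]
  congr 1
  exact sum_congr rfl fun j _ => by ring

end Eigenbasis

lemma sum_sq_gap_mul_le_sum_gap_mul_sq_gap {N k : ℕ} (hk : k + 1 ≤ N) {lam : ℕ → ℝ} {μ : ℝ}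
    {b : ℕ → ℕ → ℝ} (hb_symm : ∀ i j, b i j = b j i) (hb_nonneg : ∀ i j, 0 ≤ b i j)
    (hlow : ∀ i ≤ k, lam i ≤ μ) (hhigh : ∀ j, k < j → j < N → μ ≤ lam j) :
    ∑ i ∈ range (k + 1), (μ - lam i) ^ 2 * ∑ j ∈ range N, (lam j - lam i) * b i j ≤
      ∑ i ∈ range (k + 1), (μ - lam i) * ∑ j ∈ range N, (lam i - lam j) ^ 2 * b i j := by
  set F : ℕ → ℕ → ℝ := fun i j => (μ - lam i) * (lam j - lam i) * (lam j - μ) * b i j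
  have hdiff : ∑ i ∈ range (k + 1), (μ - lam i) * ∑ j ∈ range N, (lam i - lam j) ^ 2 * b i j -
      ∑ i ∈ range (k + 1), (μ - lam i) ^ 2 * ∑ j ∈ range N, (lam j - lam i) * b i j =
      ∑ i ∈ range (k + 1), (∑ j ∈ range (k + 1), F i j + ∑ j ∈ Ico (k + 1) N, F i j) := by
    simp only [sum_range_add_sum_Ico _ hk, mul_sum, ← sum_sub_distrib]
    exact sum_congr rfl fun i _ => sum_congr rfl fun j _ => by ring
  -- `F` is antisymmetric, so its sum over the square `[0, k] × [0, k]` vanishes.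
  have hsquare : ∑ i ∈ range (k + 1), ∑ j ∈ range (k + 1), F i j = 0 := by
    have hanti : ∑ i ∈ range (k + 1), ∑ j ∈ range (k + 1), F i j =
        ∑ i ∈ range (k + 1), ∑ j ∈ range (k + 1), -F i j := by
      rw [sum_comm]
      exact sum_congr rfl fun i _ => sum_congr rfl fun j _ => by simp only [F, hb_symm i j]; ring
    simp only [sum_neg_distrib] at hanti
    linarith
  have hcorner : 0 ≤ ∑ i ∈ range (k + 1), ∑ j ∈ Ico (k + 1) N, F i j := by
    refine sum_nonneg fun i hi => sum_nonneg fun j hj => ?_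
    have hi' := hlow i (Nat.lt_succ_iff.1 (mem_range.1 hi))
    obtain ⟨hkj, hjN⟩ := mem_Ico.1 hj
    have hj' := hhigh j hkj hjN
    have : 0 ≤ (μ - lam i) * (lam j - lam i) * (lam j - μ) := by
      apply mul_nonneg (mul_nonneg _ _) <;> linarith
    exact mul_nonneg this (hb_nonneg i j)
  rw [sum_add_distrib, hsquare, zero_add] at hdiff
  linarith

theorem stmt_17_general {V : Type*} [Fintype V] (G : SimpleGraph V) [DecidableRel G.Adj]
    (d : ℕ) (hd : 0 < d)
    (lam : ℕ → ℝ) (u : ℕ → V → ℝ)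
    (hmono : ∀ i j, i ≤ j → j < Fintype.card V → lam i ≤ lam j)
    (horth : ∀ i j, i < Fintype.card V → j < Fintype.card V →
      (d : ℝ) * ∑ x, u i x * u j x = if i = j then 1 else 0)
    (heig : ∀ i, i < Fintype.card V → ∀ x, nlap G d (u i) x + lam i * u i x = 0)
    (h : V → ℝ) :
    ∀ k, k + 1 < Fintype.card V →
      (1 / 2) * ∑ i ∈ Finset.range (k + 1), (lam (k + 1) - lam i) ^ 2 *
          (∑ x, ∑ y ∈ G.neighborFinset x, u i x * u i y * (h y - h x) ^ 2) ≤
        ∑ i ∈ Finset.range (k + 1), (lam (k + 1) - lam i) *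
          ((d : ℝ) * ∑ x, (2 * cdc G d h (u i) x + u i x * nlap G d h x) ^ 2) := by
  intro k hk
  have hi : ∀ i ∈ range (k + 1), i < Fintype.card V := fun i hi => (mem_range.1 hi).trans hk
  calc (1 / 2) * ∑ i ∈ range (k + 1), (lam (k + 1) - lam i) ^ 2 *
          (∑ x, ∑ y ∈ G.neighborFinset x, u i x * u i y * (h y - h x) ^ 2)
      = ∑ i ∈ range (k + 1), (lam (k + 1) - lam i) ^ 2 * ∑ j ∈ range (Fintype.card V),
          (lam j - lam i) * weightedInner d (h * u i) (u j) ^ 2 := by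
        rw [mul_sum]
        refine sum_congr rfl fun i hik => ?_
        rw [sum_neighborFinset_eigen_mul_sub_sq G hd.ne' horth heig h (hi i hik)]
        ring
    _ ≤ ∑ i ∈ range (k + 1), (lam (k + 1) - lam i) * ∑ j ∈ range (Fintype.card V),
          (lam i - lam j) ^ 2 * weightedInner d (h * u i) (u j) ^ 2 := by
        refine sum_sq_gap_mul_le_sum_gap_mul_sq_gap hk.le (fun i j => ?_) (fun i j => sq_nonneg _)
          (fun i hik => hmono i (k + 1) (by omega) hk) (fun j hkj hj => hmono (k + 1) j hkj hj)
        rw [weightedInner_mul_left_comm]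
    _ = _ := sum_congr rfl fun i hik => by
        rw [weightedInner_self_two_mul_cdc_add_mul_nlap G horth heig h (hi i hik)]

/-- Key lemma: for any `h : V → ℝ` and `0 ≤ k ≤ N−2`,
`(1/2)·Σ_{i=0}^k (λ_{k+1}−λ_i)²·Φ_i(h) ≤ Σ_{i=0}^k (λ_{k+1}−λ_i)·‖2Γ(h,u_i)+u_iΔh‖²`,
where `Φ_i(h) = Σ_{x∼y} u_i(x)u_i(y)(h(y)−h(x))²` and `‖v‖² = d·Σ_x v(x)²`. -/
theorem stmt_17 {V : Type*} [Fintype V] (G : SimpleGraph V) [DecidableRel G.Adj]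
    (d : ℕ) (hd : 0 < d) (hconn : G.Connected) (hreg : ∀ x, G.degree x = d)
    (lam : ℕ → ℝ) (u : ℕ → V → ℝ)
    (hmono : ∀ i j, i ≤ j → j < Fintype.card V → lam i ≤ lam j)
    (horth : ∀ i j, i < Fintype.card V → j < Fintype.card V →
      (d : ℝ) * ∑ x, u i x * u j x = if i = j then 1 else 0)
    (heig : ∀ i, i < Fintype.card V → ∀ x, nlap G d (u i) x + lam i * u i x = 0)
    (h : V → ℝ) :
    ∀ k, k + 1 < Fintype.card V →
      (1 / 2) * ∑ i ∈ Finset.range (k + 1), (lam (k + 1) - lam i) ^ 2 *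
          (∑ x, ∑ y ∈ G.neighborFinset x, u i x * u i y * (h y - h x) ^ 2) ≤
        ∑ i ∈ Finset.range (k + 1), (lam (k + 1) - lam i) *
          ((d : ℝ) * ∑ x, (2 * cdc G d h (u i) x + u i x * nlap G d h x) ^ 2) :=
  stmt_17_general G d hd lam u hmono horth heig h
end
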